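/- arXiv:2405.00849 — 2 statements merged into one kernel-verified Lean document; each statement's English description precedes it below -/
import Mathlib

section
/- For a distillation repeater with parameters as below, the maximum memory occupancy equals Q_Dist = 2M[ (τ_l + τ_p + 2τ_BSM + τ_Dec)/τ + 1 − (1 + τ_BSM/τ)·(n−k)/n ]. -/
/-! The occupancy `A (j + 1) - A c (j - s + 1)⁺ - A d (j - s - b)⁺` is concave and piecewise linear
in `j`, with slope `A` before `s`, slope `A d ≥ 0` between `s` and `s + b`, and slope `0` after
`s + b` (as `c + d = 1`). Replacing each positive part by its argument gives an upper bound that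
does not depend on `j`, and it is attained at `j = s + b`. -/

section Occupancy

variable {α : Type*} [CommRing α] [LinearOrder α] [IsStrictOrderedRing α]

/-- Memory occupancy at step `j` when `A` memories are allocated per step, a fraction `c` of them
is freed per step from step `s` on, and the fraction `d` from just after step `s + b`. -/
def occupancy (A c d s b j : α) : α :=
  A * (j + 1) - A * c * max 0 (j - s + 1) - A * d * max 0 (j - (s + b))

variable {A c d s b : α}

theorem occupancy_le (hA : 0 ≤ A) (hc : 0 ≤ c) (hd : 0 ≤ d) (hcd : c + d = 1) (j : α) :
    occupancy A c d s b j ≤ A * (s + b + 1) - A * c * (b + 1) := by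
  have hfirst := mul_le_mul_of_nonneg_left (le_max_right 0 (j - s + 1)) (mul_nonneg hA hc)
  have hsecond := mul_le_mul_of_nonneg_left (le_max_right 0 (j - (s + b))) (mul_nonneg hA hd)
  unfold occupancy
  linear_combination hfirst + hsecond - A * (j - s - b) * hcd

theorem occupancy_add (hb : 0 ≤ b) :
    occupancy A c d s b (s + b) = A * (s + b + 1) - A * c * (b + 1) := by
  have hfirst : max 0 (s + b - s + 1) = b + 1 := by
    rw [max_eq_right] <;> [ring; linarith]
  simp only [occupancy, hfirst, sub_self, max_self]
  ring

theorem isGreatest_range_occupancy (hA : 0 ≤ A) (hc : 0 ≤ c) (hd : 0 ≤ d) (hcd : c + d = 1)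
    (hb : 0 ≤ b) {j₀ : ℕ} (hj₀ : (j₀ : α) = s + b) :
    IsGreatest (Set.range fun j : ℕ => occupancy A c d s b j)
      (A * (s + b + 1) - A * c * (b + 1)) := by
  refine ⟨⟨j₀, ?_⟩, ?_⟩
  · dsimp only
    rw [hj₀, occupancy_add hb]
  · rintro _ ⟨j, rfl⟩
    exact occupancy_le hA hc hd hcd j

end Occupancy

theorem dist_repeater_max_memory_general
    (M n k L P B D : ℕ) (hn : 0 < n) (hkn : k ≤ n)
    (τ τl τp τB τD : ℚ) (hτ : 0 < τ)
    (hl : τl = (L : ℚ) * τ) (hp : τp = (P : ℚ) * τ)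
    (hB : τB = (B : ℚ) * τ) (hD : τD = (D : ℚ) * τ) :
    IsGreatest
      (Set.range fun j : ℕ =>
        2 * (M : ℚ) * ((j : ℚ) + 1)
          - 2 * M * (((n : ℚ) - k) / n) * max 0 ((j : ℚ) - ((L : ℚ) + P + B + D) + 1)
          - 2 * M * ((k : ℚ) / n) * max 0 ((j : ℚ) - ((L : ℚ) + P + B + D + B)))
      (2 * (M : ℚ) *
        ((τl + τp + 2 * τB + τD) / τ + 1 - (1 + τB / τ) * (((n : ℚ) - k) / n))) := by
  subst hl hp hB hD
  have hnQ : (n : ℚ) ≠ 0 := by positivity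
  have hvalue : 2 * (M : ℚ) *
      ((L * τ + P * τ + 2 * (B * τ) + D * τ) / τ + 1 - (1 + B * τ / τ) * ((n - k) / n))
      = 2 * M * ((L + P + B + D) + B + 1) - 2 * M * ((n - k) / n) * (B + 1) := by
    field_simp
    ring
  rw [hvalue]
  refine isGreatest_range_occupancy (by positivity)
    (div_nonneg (sub_nonneg.2 (Nat.cast_le.2 hkn)) n.cast_nonneg) (by positivity)
    (by field_simp; ring) B.cast_nonneg (j₀ := L + P + B + D + B) (by push_cast; ring)

/-- For a distillation repeater allocating 2M memories per step, which from step
s₂ = (τ_l+τ_p+τ_BSM+τ_Dec)/τ frees a fraction (n−k)/n per step (distillation)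
and from just after step s₃ = s₂ + τ_BSM/τ frees the remaining fraction k/n per
step (BSMs on distilled links), the maximum memory occupancy equals
2M[(τ_l+τ_p+2τ_BSM+τ_Dec)/τ + 1 − (1+τ_BSM/τ)(n−k)/n]. -/
theorem dist_repeater_max_memory
    (M n k L P B D : ℕ) (hM : 0 < M) (hn : 0 < n) (hk : 0 < k) (hkn : k ≤ n)
    (τ τl τp τB τD : ℚ) (hτ : 0 < τ)
    (hl : τl = (L : ℚ) * τ) (hp : τp = (P : ℚ) * τ)
    (hB : τB = (B : ℚ) * τ) (hD : τD = (D : ℚ) * τ) :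
    IsGreatest
      (Set.range fun j : ℕ =>
        2 * (M : ℚ) * ((j : ℚ) + 1)
          - 2 * M * (((n : ℚ) - k) / n) * max 0 ((j : ℚ) - ((L : ℚ) + P + B + D) + 1)
          - 2 * M * ((k : ℚ) / n) * max 0 ((j : ℚ) - ((L : ℚ) + P + B + D + B)))
      (2 * (M : ℚ) *
        ((τl + τp + 2 * τB + τD) / τ + 1 - (1 + τB / τ) * (((n : ℚ) - k) / n))) :=
  dist_repeater_max_memory_general M n k L P B D hn hkn τ τl τp τB τD hτ hl hp hB hD
end

section
/- Under the Werner swap model, if the break-even fidelity of a code is F_be ∈ (1/4, 1), then distillation after connecting N+1 links of initial fidelity F₀ is effective (i.e., F_e2e > F_be) if and only if N + 1 < log((4F_be−1)/3) / log((4F₀−1)/3); in particular there is a maximal integer number of swaps beyond which the (N+1,0) BSM-only composition cannot be improved by distillation. -/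
/-- Distillation after connecting N+1 links of fidelity F₀ is effective
(F_e2e > F_be) iff N + 1 < log((4F_be−1)/3) / log((4F₀−1)/3). -/
theorem distillation_effective_iff (F₀ Fbe : ℝ) (N : ℕ)
    (hF₀l : 1 / 4 < F₀) (hF₀u : F₀ < 1) (hFbl : 1 / 4 < Fbe) (hFbu : Fbe < 1) :
    (1 + 3 * ((4 * F₀ - 1) / 3) ^ (N + 1)) / 4 > Fbe ↔
      ((N : ℝ) + 1) <
        Real.log ((4 * Fbe - 1) / 3) / Real.log ((4 * F₀ - 1) / 3) := by
  set w := (4 * F₀ - 1) / 3 with hw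
  set wb := (4 * Fbe - 1) / 3 with hwb
  have hw0 : 0 < w := by unfold w; linarith
  have hw1 : w < 1 := by unfold w; linarith
  have hwb0 : 0 < wb := by unfold wb; linarith
  have hwb1 : wb < 1 := by unfold wb; linarith
  have hlogw : Real.log w < 0 := Real.log_neg hw0 hw1
  have h1 : (1 + 3 * w ^ (N + 1)) / 4 > Fbe ↔ wb < w ^ (N + 1) := by
    constructor <;> intro h <;> [skip; skip] <;> unfold wb at * <;> linarith
  rw [h1]
  have hwp : 0 < w ^ (N + 1) := pow_pos hw0 _
  rw [← Real.log_lt_log_iff hwb0 hwp, Real.log_pow]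
  rw [lt_div_iff_of_neg hlogw]
  push_cast
  constructor <;> intro h <;> nlinarith
end
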